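/- If the two points x and y in ℝ² are such that the open segment joining them intersects a closed obstacle set O, and the segment is sampled at N_s evenly spaced points with spacing less than the grid cell size h, while O is a union of closed grid cells of side h, then at least one sampled point lies within distance h of O; conversely if no sampled point lies in O and O is a union of cells each containing at least one sample of any segment crossing it with spacing ≤ h/√2, then the segment is disjoint from the interior of O up to a boundary layer. -/

import Mathlib

open Set Metric

/-!
Every point of the segment lies within one sampling step `dist x y / Ns` of a sample. So if the
segment meets `O`, some sample is that close to `O`; and if a point of `O` is that close to a
sample outside `O`, then its distance to `Oᶜ`, which is attained on `frontier O`, is smaller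
than `h / √2 < h`.
-/

theorem exists_nat_le_dist_div_le {N : ℕ} (hN : 0 < N) {t : ℝ} (ht : t ∈ Icc (0 : ℝ) 1) :
    ∃ k ≤ N, dist ((k : ℝ) / N) t ≤ 1 / N := by
  have hN' : (0 : ℝ) < N := by exact_mod_cast hN
  have htN : 0 ≤ t * N := mul_nonneg ht.1 hN'.le
  refine ⟨⌊t * N⌋₊, ?_, ?_⟩
  · exact_mod_cast (Nat.floor_le htN).trans (mul_le_of_le_one_left hN'.le ht.2)
  · have hle : (⌊t * N⌋₊ : ℝ) / N ≤ t := (div_le_iff₀ hN').2 (Nat.floor_le htN)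
    have hge : t - 1 / N ≤ (⌊t * N⌋₊ : ℝ) / N := by
      rw [le_div_iff₀ hN', sub_mul, one_div_mul_cancel hN'.ne']
      linarith [Nat.lt_floor_add_one (t * N)]
    rw [Real.dist_eq, abs_sub_le_iff]
    constructor <;> linarith

theorem exists_nat_le_dist_sample_le {E : Type*} [SeminormedAddCommGroup E] [NormedSpace ℝ E]
    {x y z : E} (hz : z ∈ segment ℝ x y) {N : ℕ} (hN : 0 < N) :
    ∃ k ≤ N, dist (x + ((k : ℝ) / N) • (y - x)) z ≤ dist x y / N := by
  rw [segment_eq_image'] at hz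
  obtain ⟨t, ht, rfl⟩ := hz
  obtain ⟨k, hk, hkt⟩ := exists_nat_le_dist_div_le hN ht
  refine ⟨k, hk, ?_⟩
  calc dist (x + ((k : ℝ) / N) • (y - x)) (x + t • (y - x))
      = dist ((k : ℝ) / N) t * dist x y := by
        rw [dist_add_left, dist_eq_norm, ← sub_smul, norm_smul, dist_eq_norm, dist_comm x y,
          dist_eq_norm]
    _ ≤ 1 / N * dist x y := by gcongr
    _ = dist x y / N := one_div_mul_eq_div _ _

theorem mem_thickening_frontier_of_dist_lt {E : Type*} [NormedAddCommGroup E] [NormedSpace ℝ E]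
    [FiniteDimensional ℝ E] {s : Set E} {z p : E} {r : ℝ} (hz : z ∈ s) (hp : p ∉ s)
    (hzp : dist z p < r) : z ∈ thickening r (frontier s) := by
  obtain ⟨w, hw, hzw⟩ :=
    exists_mem_frontier_infDist_compl_eq_dist hz (ne_univ_iff_exists_notMem s |>.2 ⟨p, hp⟩)
  exact mem_thickening_iff.2 ⟨w, hw, hzw ▸ (infDist_le_dist_of_mem hp).trans_lt hzp⟩

theorem segment_sampling_obstacle_detection_general (h : ℝ) (hh : 0 < h)
    (O : Set (EuclideanSpace ℝ (Fin 2)))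
    (x y : EuclideanSpace ℝ (Fin 2)) (Ns : ℕ) (hNs : 0 < Ns)
    (samp : ℕ → EuclideanSpace ℝ (Fin 2))
    (hsamp : ∀ k, samp k = x + ((k : ℝ) / (Ns : ℝ)) • (y - x)) :
    -- if the segment meets O and the sampling spacing is below the cell size h,
    -- then some sampled point lies within distance h of O
    (dist x y / (Ns : ℝ) < h → (∃ z ∈ segment ℝ x y, z ∈ O) →
      ∃ k ≤ Ns, Metric.infDist (samp k) O ≤ h) ∧
    -- conversely, with spacing at most h/√2 and no sample in O, the segment
    -- avoids the interior of O except for a boundary layer of width h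
    (dist x y / (Ns : ℝ) ≤ h / Real.sqrt 2 → (∀ k ≤ Ns, samp k ∉ O) →
      ∀ z ∈ segment ℝ x y, z ∈ interior O → z ∈ Metric.thickening h (frontier O)) := by
  constructor
  · rintro hstep ⟨z, hz, hzO⟩
    obtain ⟨k, hk, hkz⟩ := exists_nat_le_dist_sample_le hz hNs
    rw [← hsamp] at hkz
    exact ⟨k, hk, (infDist_le_dist_of_mem hzO).trans (hkz.trans hstep.le)⟩
  · intro hstep hout z hz hzO
    obtain ⟨k, hk, hkz⟩ := exists_nat_le_dist_sample_le hz hNs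
    rw [← hsamp] at hkz
    refine mem_thickening_frontier_of_dist_lt (interior_subset hzO) (hout k hk) ?_
    calc dist z (samp k) = dist (samp k) z := dist_comm _ _
      _ ≤ h / √2 := hkz.trans hstep
      _ < h := div_lt_self hh Real.one_lt_sqrt_two

theorem segment_sampling_obstacle_detection (h : ℝ) (hh : 0 < h)
    (I : Set (ℤ × ℤ)) (O : Set (EuclideanSpace ℝ (Fin 2))) (hO : IsClosed O)
    (hOcells : O = ⋃ p ∈ I, {z : EuclideanSpace ℝ (Fin 2) |
      z 0 ∈ Set.Icc ((p.1 : ℝ) * h) ((p.1 : ℝ) * h + h) ∧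
      z 1 ∈ Set.Icc ((p.2 : ℝ) * h) ((p.2 : ℝ) * h + h)})
    (x y : EuclideanSpace ℝ (Fin 2)) (Ns : ℕ) (hNs : 0 < Ns)
    (samp : ℕ → EuclideanSpace ℝ (Fin 2))
    (hsamp : ∀ k, samp k = x + ((k : ℝ) / (Ns : ℝ)) • (y - x)) :
    -- if the segment meets O and the sampling spacing is below the cell size h,
    -- then some sampled point lies within distance h of O
    (dist x y / (Ns : ℝ) < h → (∃ z ∈ segment ℝ x y, z ∈ O) →
      ∃ k ≤ Ns, Metric.infDist (samp k) O ≤ h) ∧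
    -- conversely, with spacing at most h/√2 and no sample in O, the segment
    -- avoids the interior of O except for a boundary layer of width h
    (dist x y / (Ns : ℝ) ≤ h / Real.sqrt 2 → (∀ k ≤ Ns, samp k ∉ O) →
      ∀ z ∈ segment ℝ x y, z ∈ interior O → z ∈ Metric.thickening h (frontier O)) :=
  segment_sampling_obstacle_detection_general h hh O x y Ns hNs samp hsamp
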